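/- Let k ≥ 1 be an integer and let S be a conical product rule of order k on the reference pyramid (built from two one-dimensional quadratures exact for polynomials of degree ≤ 2k+1 as in the stated hypotheses, with all points ζ_l ∈ [0,1)). Let ũ, ṽ be elements of the L²-underlying space U^{(3)}_k = Q_{k+3}^{k−1,k−1,k−1} (functions on K∞), and define û, v̂ on K̂ ∖ {ζ=1} by û(ξ,η,ζ) = (1−ζ)^{−4} · ũ(φ⁻¹(ξ,η,ζ)) and likewise for v̂, where φ⁻¹(ξ,η,ζ) = (ξ/(1−ζ), η/(1−ζ), ζ/(1−ζ)). Then û·v̂ is Lebesgue integrable on K̂ and S(û·v̂) = ∫_{K̂} û·v̂. -/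

import Mathlib

/-!
The Duffy map `(x, y, z) ↦ (x (1 - z), y (1 - z), z)` sends the unit cube onto `K̂` with
Jacobian `(1 - z)²`, and the conical product rule is the tensor product of the two
one-dimensional rules read through this map. A function that pulls back to
`h₁(x) h₂(y) g(z)` therefore integrates to `∫h₁ · ∫h₂ · ∫(1 - z)² g`, and the rule reproduces
this when `h₁, h₂, g` are polynomials of degree `≤ 2k + 1`. For monomials
`ũ, ṽ ∈ Q_{k+3}^{k-1,k-1,k-1}` the product `û v̂` pulls back to
`x^A y^B z^C (1 - z)^(2k-2-C)` with `A, B, C ≤ 2k - 2`, so the rule is exact on it, and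
bilinearity extends this to the whole space. The plane `ζ = 1`, where `û` is not given, is
null and contains no quadrature node.
-/

open MeasureTheory

noncomputable section

/-- The reference pyramid K̂ ⊂ ℝ³ (coordinates (ξ, η, ζ)). -/
def Khat : Set (ℝ × ℝ × ℝ) :=
  {p | 0 ≤ p.2.2 ∧ p.2.2 ≤ 1 ∧ 0 ≤ p.1 ∧ p.1 ≤ 1 - p.2.2 ∧ 0 ≤ p.2.1 ∧ p.2.1 ≤ 1 - p.2.2}

/-- The k-weighted tensor product polynomial space Q_k^{l,m,n}: the span of
(x,y,z) ↦ x^a y^b z^c / (1+z)^k for 0 ≤ a ≤ l, 0 ≤ b ≤ m, 0 ≤ c ≤ n. -/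
def Qspace (k : ℕ) (l m n : ℤ) : Submodule ℝ ((ℝ × ℝ × ℝ) → ℝ) :=
  Submodule.span ℝ {f | ∃ a b c : ℕ, (a : ℤ) ≤ l ∧ (b : ℤ) ≤ m ∧ (c : ℤ) ≤ n ∧
    f = fun p => p.1 ^ a * p.2.1 ^ b * p.2.2 ^ c / (1 + p.2.2) ^ k}

/-- The inverse of the projective map φ: (ξ,η,ζ) ↦ (ξ/(1−ζ), η/(1−ζ), ζ/(1−ζ)). -/
def phiInv (p : ℝ × ℝ × ℝ) : ℝ × ℝ × ℝ :=
  (p.1 / (1 - p.2.2), p.2.1 / (1 - p.2.2), p.2.2 / (1 - p.2.2))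

/-- The conical product quadrature rule on the reference pyramid. -/
def quadS {N M : ℕ} (xi lam : Fin N → ℝ) (ze mu : Fin M → ℝ) (f : ℝ × ℝ × ℝ → ℝ) : ℝ :=
  ∑ i, ∑ j, ∑ l, lam i * lam j * mu l * f (xi i * (1 - ze l), xi j * (1 - ze l), ze l)

open Set Polynomial

lemma measurableSet_fiberIcc {β : Type*} [MeasurableSpace β] {S : Set β} (hS : MeasurableSet S)
    {b : β → ℝ} (hb : Measurable b) :
    MeasurableSet {p : ℝ × β | p.2 ∈ S ∧ p.1 ∈ Icc 0 (b p.2)} :=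
  (hS.preimage measurable_snd).inter
    ((measurableSet_le measurable_const measurable_fst).inter
      (measurableSet_le measurable_fst (hb.comp measurable_snd)))

lemma integrableOn_and_setIntegral_fiberIcc {β : Type*} [MeasurableSpace β] {ν : Measure β}
    [SFinite ν] {S : Set β} (hS : MeasurableSet S) {b : β → ℝ} (hb : Measurable b)
    (hb0 : ∀ q ∈ S, 0 ≤ b q) {f : ℝ × β → ℝ}
    (hf : IntegrableOn f {p | p.2 ∈ S ∧ p.1 ∈ Icc 0 (b p.2)} (volume.prod ν)) :
    IntegrableOn (fun q => ∫ x in 0..b q, f (x, q)) S ν ∧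
      ∫ p in {p | p.2 ∈ S ∧ p.1 ∈ Icc 0 (b p.2)}, f p ∂(volume.prod ν) =
        ∫ q in S, (∫ x in 0..b q, f (x, q)) ∂ν := by
  set K := {p : ℝ × β | p.2 ∈ S ∧ p.1 ∈ Icc 0 (b p.2)}
  have hK : MeasurableSet K := measurableSet_fiberIcc hS hb
  have hint : Integrable (K.indicator f) (volume.prod ν) := (integrable_indicator_iff hK).2 hf
  have hfiber : (fun q => ∫ x, K.indicator f (x, q)) =
      S.indicator (fun q => ∫ x in 0..b q, f (x, q)) := by
    ext q
    by_cases hq : q ∈ S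
    · rw [indicator_of_mem hq, intervalIntegral.integral_of_le (hb0 q hq),
        ← integral_Icc_eq_integral_Ioc, ← integral_indicator measurableSet_Icc]
      congr 1 with x
      simp only [K, indicator, mem_ofPred_eq, hq, true_and]
    · simp [K, indicator, hq]
  refine ⟨?_, ?_⟩
  · have := hint.integral_prod_right
    rwa [hfiber, integrable_indicator_iff hS] at this
  · rw [← integral_indicator hK, integral_prod_symm _ hint, hfiber, integral_indicator hS]

lemma intervalIntegral_comp_div_self (h : ℝ → ℝ) (t : ℝ) :
    ∫ x in 0..t, h (x / t) = t * ∫ x in 0..1, h x := by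
  rcases eq_or_ne t 0 with rfl | ht
  · simp
  · rw [intervalIntegral.integral_comp_div h ht, zero_div, div_self ht, smul_eq_mul]

def unitTriangle : Set (ℝ × ℝ) := {q | q.2 ∈ Icc 0 1 ∧ q.1 ∈ Icc 0 (1 - q.2)}

lemma Khat_eq_fiberIcc :
    Khat = {p : ℝ × ℝ × ℝ | p.2 ∈ unitTriangle ∧ p.1 ∈ Icc 0 (1 - p.2.2)} := by
  ext p
  simp only [Khat, unitTriangle, mem_ofPred_eq, mem_Icc]
  tauto

lemma measurableSet_Khat : MeasurableSet Khat := by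
  rw [Khat_eq_fiberIcc]
  exact measurableSet_fiberIcc
    (measurableSet_fiberIcc measurableSet_Icc (b := fun z => 1 - z) (by fun_prop))
    (b := fun q => 1 - q.2) (by fun_prop)

lemma volume_Khat_ne_top : volume Khat ≠ ⊤ := by
  refine ne_top_of_le_ne_top (isCompact_Icc (a := (0, 0, 0)) (b := (1, 1, 1))).measure_ne_top
    (measure_mono ?_)
  rintro ⟨x, y, z⟩ ⟨hz0, hz1, hx0, hx1, hy0, hy1⟩
  exact ⟨⟨hx0, hy0, hz0⟩, ⟨by linarith, by linarith, hz1⟩⟩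

lemma volume_setOf_snd_snd_eq (c : ℝ) : volume {p : ℝ × ℝ × ℝ | p.2.2 = c} = 0 := by
  rw [show {p : ℝ × ℝ × ℝ | p.2.2 = c} = univ ×ˢ (univ ×ˢ {c}) by ext; simp,
    Measure.volume_eq_prod, Measure.prod_prod, Measure.volume_eq_prod, Measure.prod_prod,
    Real.volume_singleton, mul_zero, mul_zero]

/-- A function on `K̂` that becomes the tensor product `h₁ ⊗ h₂ ⊗ g` after pulling back
along the Duffy map `(x, y, z) ↦ (x (1 - z), y (1 - z), z)` from the unit cube. -/
def duffyTensor (h₁ h₂ g : ℝ → ℝ) (p : ℝ × ℝ × ℝ) : ℝ :=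
  h₁ (p.1 / (1 - p.2.2)) * h₂ (p.2.1 / (1 - p.2.2)) * g p.2.2

lemma div_one_sub_mem_Icc {x z : ℝ} (hx : 0 ≤ x) (hxz : x ≤ 1 - z) : x / (1 - z) ∈ Icc 0 1 :=
  ⟨div_nonneg hx (hx.trans hxz), div_le_one_of_le₀ hxz (hx.trans hxz)⟩

lemma integrableOn_Khat_duffyTensor {h₁ h₂ g : ℝ → ℝ} (hh₁ : Continuous h₁)
    (hh₂ : Continuous h₂) (hg : Continuous g) :
    IntegrableOn (duffyTensor h₁ h₂ g) Khat := by
  have bound : ∀ h : ℝ → ℝ, Continuous h → ∃ C, 0 ≤ C ∧ ∀ x ∈ Icc (0 : ℝ) 1, ‖h x‖ ≤ C := by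
    intro h hh
    obtain ⟨C, hC⟩ := isCompact_Icc.exists_bound_of_continuousOn hh.continuousOn
    exact ⟨C, (norm_nonneg _).trans (hC 0 ⟨le_rfl, zero_le_one⟩), hC⟩
  obtain ⟨C₁, hC₁0, hC₁⟩ := bound h₁ hh₁
  obtain ⟨C₂, hC₂0, hC₂⟩ := bound h₂ hh₂
  obtain ⟨C₃, -, hC₃⟩ := bound g hg
  refine Measure.integrableOn_of_bounded (M := C₁ * C₂ * C₃) volume_Khat_ne_top
    (Measurable.aestronglyMeasurable (by unfold duffyTensor; fun_prop))
    (ae_restrict_of_forall_mem measurableSet_Khat ?_)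
  rintro ⟨x, y, z⟩ ⟨hz0, hz1, hx0, hx1, hy0, hy1⟩
  rw [duffyTensor, norm_mul, norm_mul]
  gcongr
  · exact hC₁ _ (div_one_sub_mem_Icc hx0 hx1)
  · exact hC₂ _ (div_one_sub_mem_Icc hy0 hy1)
  · exact hC₃ _ ⟨hz0, hz1⟩

lemma integral_Khat_duffyTensor {h₁ h₂ g : ℝ → ℝ} (hh₁ : Continuous h₁) (hh₂ : Continuous h₂)
    (hg : Continuous g) :
    ∫ p in Khat, duffyTensor h₁ h₂ g p =
      (∫ x in 0..1, h₁ x) * (∫ y in 0..1, h₂ y) * ∫ z in 0..1, (1 - z) ^ 2 * g z := by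
  set I₁ := ∫ x in 0..1, h₁ x
  set I₂ := ∫ y in 0..1, h₂ y
  have hint := integrableOn_Khat_duffyTensor hh₁ hh₂ hg
  rw [Khat_eq_fiberIcc] at hint ⊢
  obtain ⟨hint₂, hK⟩ := integrableOn_and_setIntegral_fiberIcc
    (measurableSet_fiberIcc measurableSet_Icc (b := fun z => 1 - z) (by fun_prop))
    (b := fun q => 1 - q.2) (by fun_prop) (fun q hq => sub_nonneg.2 hq.1.2) hint
  have hx : ∀ q : ℝ × ℝ, ∫ x in 0..1 - q.2, duffyTensor h₁ h₂ g (x, q) =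
      I₁ * ((1 - q.2) * (h₂ (q.1 / (1 - q.2)) * g q.2)) := by
    intro q
    simp only [duffyTensor, intervalIntegral.integral_mul_const, intervalIntegral_comp_div_self]
    ring
  simp only [hx] at hint₂ hK
  obtain ⟨-, hT⟩ := integrableOn_and_setIntegral_fiberIcc measurableSet_Icc
    (b := fun z => 1 - z) (by fun_prop) (fun z hz => sub_nonneg.2 hz.2) hint₂
  have hy : ∀ z : ℝ, ∫ y in 0..1 - z, I₁ * ((1 - z) * (h₂ (y / (1 - z)) * g z)) =
      I₁ * I₂ * ((1 - z) ^ 2 * g z) := by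
    intro z
    simp only [intervalIntegral.integral_const_mul, intervalIntegral.integral_mul_const,
      intervalIntegral_comp_div_self]
    ring
  simp only [hy] at hT
  refine hK.trans (hT.trans ?_)
  rw [integral_Icc_eq_integral_Ioc, ← intervalIntegral.integral_of_le zero_le_one,
    intervalIntegral.integral_const_mul]

section Quadrature

variable {N M : ℕ} (xi lam : Fin N → ℝ) (ze mu : Fin M → ℝ)

lemma quadS_add (f g : ℝ × ℝ × ℝ → ℝ) :
    quadS xi lam ze mu (f + g) = quadS xi lam ze mu f + quadS xi lam ze mu g := by
  simp only [quadS, Pi.add_apply, mul_add, Finset.sum_add_distrib]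

lemma quadS_smul (c : ℝ) (f : ℝ × ℝ × ℝ → ℝ) :
    quadS xi lam ze mu (c • f) = c * quadS xi lam ze mu f := by
  simp only [quadS, Pi.smul_apply, smul_eq_mul, Finset.mul_sum]
  exact Finset.sum_congr rfl fun i _ => Finset.sum_congr rfl fun j _ =>
    Finset.sum_congr rfl fun l _ => by ring

lemma quadS_congr {f g : ℝ × ℝ × ℝ → ℝ} (hze : ∀ l, ze l ≠ 1)
    (hfg : ∀ p : ℝ × ℝ × ℝ, p.2.2 ≠ 1 → f p = g p) :
    quadS xi lam ze mu f = quadS xi lam ze mu g := by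
  unfold quadS
  exact Finset.sum_congr rfl fun i _ => Finset.sum_congr rfl fun j _ =>
    Finset.sum_congr rfl fun l _ => by rw [hfg _ (hze l)]

lemma quadS_duffyTensor (hze : ∀ l, ze l ≠ 1) (h₁ h₂ g : ℝ → ℝ) :
    quadS xi lam ze mu (duffyTensor h₁ h₂ g) =
      (∑ i, lam i * h₁ (xi i)) * (∑ j, lam j * h₂ (xi j)) * ∑ l, mu l * g (ze l) := by
  have hcancel : ∀ x l, x * (1 - ze l) / (1 - ze l) = x := fun x l =>
    mul_div_cancel_right₀ x (sub_ne_zero.2 (hze l).symm)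
  simp only [quadS, duffyTensor, hcancel]
  rw [Finset.sum_mul_sum, Finset.sum_mul]
  refine Finset.sum_congr rfl fun i _ => ?_
  rw [Finset.sum_mul]
  refine Finset.sum_congr rfl fun j _ => ?_
  rw [Finset.mul_sum]
  exact Finset.sum_congr rfl fun l _ => by ring

def quadSExact : Submodule ℝ (ℝ × ℝ × ℝ → ℝ) where
  carrier := {f | IntegrableOn f Khat ∧ quadS xi lam ze mu f = ∫ p in Khat, f p}
  zero_mem' := ⟨integrableOn_zero, by simp [quadS]⟩
  add_mem' := fun ⟨hf, ef⟩ ⟨hg, eg⟩ =>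
    ⟨hf.add hg, by rw [quadS_add, Pi.add_def, integral_add hf hg, ef, eg]⟩
  smul_mem' := fun c _ ⟨hf, ef⟩ =>
    ⟨hf.smul c, by rw [quadS_smul, Pi.smul_def, integral_smul, ef, smul_eq_mul]⟩

variable {xi lam ze mu}

lemma mem_quadSExact_of_eq_off_plane {f g : ℝ × ℝ × ℝ → ℝ} (hze : ∀ l, ze l ≠ 1)
    (hf : f ∈ quadSExact xi lam ze mu) (hfg : ∀ p : ℝ × ℝ × ℝ, p.2.2 ≠ 1 → g p = f p) :
    g ∈ quadSExact xi lam ze mu := by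
  have hae : g =ᵐ[volume.restrict Khat] f :=
    ae_restrict_of_ae ((measure_eq_zero_iff_ae_notMem.1 (volume_setOf_snd_snd_eq 1)).mono hfg)
  refine ⟨hf.1.congr_fun_ae hae.symm, ?_⟩
  rw [quadS_congr xi lam ze mu hze hfg, hf.2, integral_congr_ae hae]

lemma duffyTensor_mem_quadSExact {d : ℕ} (hze : ∀ l, ze l ≠ 1)
    (hxi : ∀ g : ℝ[X], g.natDegree ≤ d → ∑ i, lam i * g.eval (xi i) = ∫ x in (0:ℝ)..1, g.eval x)
    (hmu : ∀ h : ℝ[X], h.natDegree ≤ d →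
      ∑ l, mu l * h.eval (ze l) = ∫ z in (0:ℝ)..1, (1 - z) ^ 2 * h.eval z)
    {p₁ p₂ q : ℝ[X]} (hp₁ : p₁.natDegree ≤ d) (hp₂ : p₂.natDegree ≤ d) (hq : q.natDegree ≤ d) :
    duffyTensor (fun x => p₁.eval x) (fun y => p₂.eval y) (fun z => q.eval z) ∈
      quadSExact xi lam ze mu :=
  ⟨integrableOn_Khat_duffyTensor p₁.continuous p₂.continuous q.continuous, by
    rw [quadS_duffyTensor xi lam ze mu hze, integral_Khat_duffyTensor p₁.continuous p₂.continuous
      q.continuous, hxi p₁ hp₁, hxi p₂ hp₂, hmu q hq]⟩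

end Quadrature

def pyramidHat : (ℝ × ℝ × ℝ → ℝ) →ₗ[ℝ] (ℝ × ℝ × ℝ → ℝ) where
  toFun w p := (1 - p.2.2) ^ (-4 : ℤ) * w (phiInv p)
  map_add' _ _ := by ext p; simp only [Pi.add_apply, mul_add]
  map_smul' _ _ := by ext p; simp only [Pi.smul_apply, smul_eq_mul, RingHom.id_apply]; ring

lemma pyramidHat_monomial_eq {n a b c : ℕ} (hc : c + 4 ≤ n) {p : ℝ × ℝ × ℝ} (hp : p.2.2 ≠ 1) :
    pyramidHat (fun q => q.1 ^ a * q.2.1 ^ b * q.2.2 ^ c / (1 + q.2.2) ^ n) p =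
      duffyTensor (fun x => x ^ a) (fun y => y ^ b) (fun z => z ^ c * (1 - z) ^ (n - 4 - c)) p := by
  obtain ⟨m, rfl⟩ : ∃ m, n = m + c + 4 := ⟨n - 4 - c, by omega⟩
  obtain ⟨x, y, z⟩ := p
  have ht : (1 : ℝ) - z ≠ 0 := sub_ne_zero.2 (Ne.symm hp)
  simp only [pyramidHat, LinearMap.coe_mk, AddHom.coe_mk, phiInv, duffyTensor,
    show 1 + z / (1 - z) = (1 - z)⁻¹ by field_simp; ring, show m + c + 4 - 4 - c = m by omega]
  generalize 1 - z = t at ht ⊢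
  rw [zpow_neg, zpow_ofNat, inv_pow, div_inv_eq_mul, pow_add, pow_add, div_pow, div_pow, div_pow]
  field_simp

section Exactness

variable {N M d : ℕ} {xi lam : Fin N → ℝ} {ze mu : Fin M → ℝ} (hze : ∀ l, ze l ≠ 1)
  (hxi : ∀ g : ℝ[X], g.natDegree ≤ d → ∑ i, lam i * g.eval (xi i) = ∫ x in (0:ℝ)..1, g.eval x)
  (hmu : ∀ h : ℝ[X], h.natDegree ≤ d →
    ∑ l, mu l * h.eval (ze l) = ∫ z in (0:ℝ)..1, (1 - z) ^ 2 * h.eval z)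
include hze hxi hmu

lemma pyramidHat_monomial_mul_mem_quadSExact {n a b c a' b' c' : ℕ} (hc : c + 4 ≤ n)
    (hc' : c' + 4 ≤ n) (ha : a + a' ≤ d) (hb : b + b' ≤ d) (hn : 2 * (n - 4) ≤ d) :
    pyramidHat (fun q => q.1 ^ a * q.2.1 ^ b * q.2.2 ^ c / (1 + q.2.2) ^ n) *
      pyramidHat (fun q => q.1 ^ a' * q.2.1 ^ b' * q.2.2 ^ c' / (1 + q.2.2) ^ n) ∈
        quadSExact xi lam ze mu := by
  refine mem_quadSExact_of_eq_off_plane hze (duffyTensor_mem_quadSExact hze hxi hmu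
    (p₁ := X ^ (a + a')) (p₂ := X ^ (b + b'))
    (q := X ^ c * (1 - X) ^ (n - 4 - c) * (X ^ c' * (1 - X) ^ (n - 4 - c'))) ?_ ?_ ?_) ?_
  · simpa using ha
  · simpa using hb
  · compute_degree
    omega
  · intro p hp
    rw [Pi.mul_apply, pyramidHat_monomial_eq hc hp, pyramidHat_monomial_eq hc' hp]
    simp only [duffyTensor, eval_mul, eval_pow, eval_X, eval_sub, eval_one]
    ring

lemma pyramidHat_mul_mem_quadSExact {n : ℕ} {l m r : ℤ} (hr : r + 4 ≤ n) (hl : 2 * l ≤ d)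
    (hm : 2 * m ≤ d) (hn : 2 * ((n : ℤ) - 4) ≤ d) {u v : ℝ × ℝ × ℝ → ℝ}
    (hu : u ∈ Qspace n l m r) (hv : v ∈ Qspace n l m r) :
    pyramidHat u * pyramidHat v ∈ quadSExact xi lam ze mu := by
  let B := (LinearMap.mul ℝ (ℝ × ℝ × ℝ → ℝ)).compl₁₂ pyramidHat pyramidHat
  suffices Submodule.map₂ B (Qspace n l m r) (Qspace n l m r) ≤ quadSExact xi lam ze mu from
    this (Submodule.apply_mem_map₂ B hu hv)
  rw [Qspace, Submodule.map₂_span_span, Submodule.span_le]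
  rintro _ ⟨_, ⟨a, b, c, ha, hb, hc, rfl⟩, _, ⟨a', b', c', ha', hb', hc', rfl⟩, rfl⟩
  exact pyramidHat_monomial_mul_mem_quadSExact hze hxi hmu (by omega) (by omega) (by omega)
    (by omega) (by omega)

end Exactness

theorem stmt_4_general (k : ℕ) {N M : ℕ} (xi lam : Fin N → ℝ) (ze mu : Fin M → ℝ)
    (hze : ∀ l, ze l ∈ Set.Ico (0 : ℝ) 1)
    (hxi : ∀ g : Polynomial ℝ, g.natDegree ≤ 2 * k + 1 →
      ∑ i, lam i * g.eval (xi i) = ∫ x in (0:ℝ)..1, g.eval x)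
    (hmu : ∀ h : Polynomial ℝ, h.natDegree ≤ 2 * k + 1 →
      ∑ l, mu l * h.eval (ze l) = ∫ z in (0:ℝ)..1, (1 - z) ^ 2 * h.eval z)
    (ut vt : (ℝ × ℝ × ℝ) → ℝ)
    (hut : ut ∈ Qspace (k + 3) ((k : ℤ) - 1) ((k : ℤ) - 1) ((k : ℤ) - 1))
    (hvt : vt ∈ Qspace (k + 3) ((k : ℤ) - 1) ((k : ℤ) - 1) ((k : ℤ) - 1))
    (uh vh : (ℝ × ℝ × ℝ) → ℝ)
    (huh : ∀ p : ℝ × ℝ × ℝ, p.2.2 ≠ 1 → uh p = (1 - p.2.2) ^ (-4 : ℤ) * ut (phiInv p))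
    (hvh : ∀ p : ℝ × ℝ × ℝ, p.2.2 ≠ 1 → vh p = (1 - p.2.2) ^ (-4 : ℤ) * vt (phiInv p)) :
    IntegrableOn (fun p => uh p * vh p) Khat volume ∧
    quadS xi lam ze mu (fun p => uh p * vh p) = ∫ p in Khat, uh p * vh p := by
  have hze₁ : ∀ l, ze l ≠ 1 := fun l => (hze l).2.ne
  have hexact : pyramidHat ut * pyramidHat vt ∈ quadSExact xi lam ze mu :=
    pyramidHat_mul_mem_quadSExact hze₁ hxi hmu (by push_cast; omega) (by omega) (by omega)
      (by push_cast; omega) hut hvt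
  exact mem_quadSExact_of_eq_off_plane hze₁ hexact fun p hp => by
    rw [huh p hp, hvh p hp]
    rfl

/-- for ũ, ṽ in the L²-underlying space U^{(3)}_k = Q_{k+3}^{k−1,k−1,k−1},
with û = (1−ζ)⁻⁴ · (ũ ∘ φ⁻¹) and v̂ likewise, the product û·v̂ is integrable on K̂
and the conical product rule of order k ≥ 1 is exact for it. -/
theorem stmt_4 (k : ℕ) (hk : 1 ≤ k) {N M : ℕ} (xi lam : Fin N → ℝ) (ze mu : Fin M → ℝ)
    (hze : ∀ l, ze l ∈ Set.Ico (0 : ℝ) 1)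
    (hxi : ∀ g : Polynomial ℝ, g.natDegree ≤ 2 * k + 1 →
      ∑ i, lam i * g.eval (xi i) = ∫ x in (0:ℝ)..1, g.eval x)
    (hmu : ∀ h : Polynomial ℝ, h.natDegree ≤ 2 * k + 1 →
      ∑ l, mu l * h.eval (ze l) = ∫ z in (0:ℝ)..1, (1 - z) ^ 2 * h.eval z)
    (ut vt : (ℝ × ℝ × ℝ) → ℝ)
    (hut : ut ∈ Qspace (k + 3) ((k : ℤ) - 1) ((k : ℤ) - 1) ((k : ℤ) - 1))
    (hvt : vt ∈ Qspace (k + 3) ((k : ℤ) - 1) ((k : ℤ) - 1) ((k : ℤ) - 1))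
    (uh vh : (ℝ × ℝ × ℝ) → ℝ)
    (huh : ∀ p : ℝ × ℝ × ℝ, p.2.2 ≠ 1 → uh p = (1 - p.2.2) ^ (-4 : ℤ) * ut (phiInv p))
    (hvh : ∀ p : ℝ × ℝ × ℝ, p.2.2 ≠ 1 → vh p = (1 - p.2.2) ^ (-4 : ℤ) * vt (phiInv p)) :
    IntegrableOn (fun p => uh p * vh p) Khat volume ∧
    quadS xi lam ze mu (fun p => uh p * vh p) = ∫ p in Khat, uh p * vh p :=
  stmt_4_general k xi lam ze mu hze hxi hmu ut vt hut hvt uh vh huh hvh
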